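/- Let G and H be finite simple graphs. If the Cartesian product G □ H is well-covered, then at least one of G or H is well-covered. -/

import Mathlib

/-!
In a well-covered graph, an independent set `P` whose closed neighbourhood contains that of an
independent set `P'` is at least as large: complete `P` to a maximal independent set `I`, and
`P' ∪ (I \ P)` to another one.

Suppose neither `G` nor `H` is well-covered. If `G` has an isolatable vertex `x`, say
`N[M]ᶜ = {x}`, take maximal independent sets `T₁`, `T₂` of `H` with `|T₁| < |T₂|`: then
`(M ∪ {x}) × T₂` is larger than `M × T₂ ∪ {x} × T₁` but dominates no more. The same works with
the factors exchanged. If neither factor has an isolatable vertex, every independent set extends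
to a maximal one avoiding a given disjoint independent set; shrinking the intersection of two
maximal independent sets of different sizes then yields disjoint such pairs `A, A'` in `G` and
`T, T'` in `H`. Now `A × T ∪ A' × T'` and `A × T' ∪ A' × T` have the same closed neighbourhood,
but their sizes differ by `(|A| - |A'|) (|T| - |T'|) ≠ 0`.
-/

/-- A set of vertices is independent if no two of its vertices are adjacent. -/
def IsIndep {V : Type*} (G : SimpleGraph V) (s : Set V) : Prop :=
  ∀ ⦃u⦄, u ∈ s → ∀ ⦃v⦄, v ∈ s → ¬ G.Adj u v

/-- A maximal independent set: independent and contained in no strictly larger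
independent set. -/
def MaxIndep {V : Type*} (G : SimpleGraph V) (s : Set V) : Prop :=
  IsIndep G s ∧ ∀ t : Set V, IsIndep G t → s ⊆ t → s = t

/-- A maximal independent set of the subgraph induced on `A`. -/
def MaxIndepOn {V : Type*} (G : SimpleGraph V) (A : Set V) (s : Set V) : Prop :=
  s ⊆ A ∧ IsIndep G s ∧ ∀ t : Set V, t ⊆ A → IsIndep G t → s ⊆ t → s = t

/-- A graph is well-covered if every maximal independent set has the same cardinality. -/
def WellCovered {V : Type*} (G : SimpleGraph V) : Prop :=
  ∀ s t : Set V, MaxIndep G s → MaxIndep G t → s.ncard = t.ncard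

/-- The closed neighborhood `N[S]`: the union of `S` with the set of all vertices
adjacent to some vertex of `S`. -/
def ClosedNbhd {V : Type*} (G : SimpleGraph V) (S : Set V) : Set V :=
  S ∪ {v | ∃ u ∈ S, G.Adj u v}

/-- A vertex `x` is isolatable if there is an independent set `M` such that `x` is the
unique vertex lying outside `N[M]`. -/
def Isolatable {V : Type*} (G : SimpleGraph V) (x : V) : Prop :=
  ∃ M : Set V, IsIndep G M ∧ (ClosedNbhd G M)ᶜ = {x}


open Set SimpleGraph

section Graph

variable {V V' : Type*} {G : SimpleGraph V} {G' : SimpleGraph V'} {s t A B J Z P P' : Set V}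

lemma mem_closedNbhd {v : V} : v ∈ ClosedNbhd G s ↔ v ∈ s ∨ ∃ u ∈ s, G.Adj u v := Iff.rfl

lemma closedNbhd_union : ClosedNbhd G (s ∪ t) = ClosedNbhd G s ∪ ClosedNbhd G t := by
  ext v
  simp only [mem_closedNbhd, mem_union]
  aesop

lemma isIndep_singleton (x : V) : IsIndep G {x} := by
  rintro u rfl v rfl
  exact G.irrefl

lemma IsIndep.mono (hs : IsIndep G s) (hts : t ⊆ s) : IsIndep G t :=
  fun _ hu _ hv => hs (hts hu) (hts hv)

lemma IsIndep.union (hs : IsIndep G s) (ht : IsIndep G t) (hts : t ⊆ (ClosedNbhd G s)ᶜ) :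
    IsIndep G (s ∪ t) := by
  rintro u (hu | hu) v (hv | hv) huv
  · exact hs hu hv huv
  · exact hts hv (Or.inr ⟨u, hu, huv⟩)
  · exact hts hu (Or.inr ⟨v, hv, huv.symm⟩)
  · exact ht hu hv huv

lemma IsIndep.sdiff_subset_compl_closedNbhd (hs : IsIndep G s) (hts : t ⊆ s) :
    s \ t ⊆ (ClosedNbhd G t)ᶜ := by
  rintro v ⟨hvs, hvt⟩ (hv | ⟨u, hu, huv⟩)
  · exact hvt hv
  · exact hs (hts hu) hvs huv

lemma maxIndep_iff : MaxIndep G s ↔ IsIndep G s ∧ ClosedNbhd G s = univ := by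
  refine ⟨fun ⟨hs, hmax⟩ => ⟨hs, eq_univ_of_forall fun v => ?_⟩, fun ⟨hs, hN⟩ => ⟨hs, ?_⟩⟩
  · by_contra hv
    have := hmax _ (hs.union (isIndep_singleton v) (singleton_subset_iff.2 hv)) subset_union_left
    exact hv (Or.inl (this ▸ Or.inr rfl))
  · refine fun t ht hst => subset_antisymm hst fun v hv => ?_
    rcases hN ▸ mem_univ v with hvs | ⟨u, hu, huv⟩
    · exact hvs
    · exact (ht (hst hu) hv huv).elim

lemma MaxIndep.closedNbhd_eq_univ (hs : MaxIndep G s) : ClosedNbhd G s = univ :=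
  (maxIndep_iff.1 hs).2

lemma IsIndep.exists_maxIndep_superset [Finite V] (hs : IsIndep G s) :
    ∃ t, MaxIndep G t ∧ s ⊆ t := by
  obtain ⟨t, hst, ht, hmax⟩ := Finite.exists_le_maximal (p := IsIndep G) hs
  exact ⟨t, ⟨ht, fun u hu htu => le_antisymm htu (hmax hu htu)⟩, hst⟩

lemma exists_maxIndep_ncard_lt (hG : ¬ WellCovered G) :
    ∃ s t, MaxIndep G s ∧ MaxIndep G t ∧ s.ncard < t.ncard := by
  simp only [WellCovered, not_forall] at hG
  obtain ⟨s, t, hs, ht, hst⟩ := hG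
  rcases lt_or_gt_of_ne hst with h | h
  exacts [⟨s, t, hs, ht, h⟩, ⟨t, s, ht, hs, h⟩]

lemma MaxIndep.image (e : G ≃g G') (hs : MaxIndep G s) : MaxIndep G' (e '' s) := by
  refine ⟨?_, fun t ht hst => ?_⟩
  · rintro _ ⟨u, hu, rfl⟩ _ ⟨v, hv, rfl⟩ huv
    exact hs.1 hu hv (e.map_adj_iff.1 huv)
  · have : s = e ⁻¹' t :=
      hs.2 _ (fun u hu v hv huv => ht hu hv (e.map_adj_iff.2 huv)) (image_subset_iff.1 hst)
    rw [this, image_preimage_eq _ e.surjective]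

lemma WellCovered.of_iso (e : G ≃g G') (h : WellCovered G') : WellCovered G := by
  intro s t hs ht
  simpa only [ncard_image_of_injective _ e.injective] using h _ _ (hs.image e) (ht.image e)

theorem WellCovered.ncard_le_of_closedNbhd_subset [Finite V] (hG : WellCovered G)
    (hP : IsIndep G P) (hP' : IsIndep G P') (h : ClosedNbhd G P' ⊆ ClosedNbhd G P) :
    P'.ncard ≤ P.ncard := by
  obtain ⟨I, hI, hPI⟩ := hP.exists_maxIndep_superset
  have hQ : I \ P ⊆ (ClosedNbhd G P')ᶜ :=
    (hI.1.sdiff_subset_compl_closedNbhd hPI).trans (compl_subset_compl.2 h)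
  obtain ⟨I', hI', hI'sub⟩ := (hP'.union (hI.1.mono sdiff_subset) hQ).exists_maxIndep_superset
  have hdisj : Disjoint P' (I \ P) := disjoint_left.2 fun v hv hvQ => hQ hvQ (Or.inl hv)
  have := calc P'.ncard + (I \ P).ncard
      _ = (P' ∪ I \ P).ncard := (ncard_union_eq hdisj).symm
      _ ≤ I'.ncard := ncard_le_ncard hI'sub
      _ = I.ncard := hG _ _ hI' hI
      _ = (I \ P).ncard + P.ncard := (ncard_sdiff_add_ncard_of_subset hPI).symm
  omega

/-- Take `K ⊇ J` maximal among the independent sets disjoint from `Z`. Every vertex outside `N[K]`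
then lies in `Z`, and all of them but one, `z`, together with `K` would isolate `z`. -/
theorem exists_maxIndep_superset_disjoint [Finite V] (hni : ∀ x, ¬ Isolatable G x)
    (hJ : IsIndep G J) (hZ : IsIndep G Z) (hJZ : Disjoint J Z) :
    ∃ K, MaxIndep G K ∧ J ⊆ K ∧ Disjoint K Z := by
  obtain ⟨K, hJK, ⟨hK, -, hKZ⟩, hmax⟩ := Finite.exists_le_maximal
    (p := fun K => IsIndep G K ∧ J ⊆ K ∧ Disjoint K Z) ⟨hJ, subset_rfl, hJZ⟩
  refine ⟨K, maxIndep_iff.2 ⟨hK, ?_⟩, hJK, hKZ⟩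
  have hUZ : (ClosedNbhd G K)ᶜ ⊆ Z := by
    intro v hv
    by_contra hvZ
    have := hmax ⟨hK.union (isIndep_singleton v) (singleton_subset_iff.2 hv),
      hJK.trans subset_union_left, disjoint_union_left.2 ⟨hKZ, disjoint_singleton_left.2 hvZ⟩⟩
      subset_union_left
    exact hv (Or.inl (this (Or.inr rfl)))
  by_contra hne
  obtain ⟨z, hz⟩ := (ne_univ_iff_exists_notMem _).1 hne
  refine hni z ⟨K ∪ ((ClosedNbhd G K)ᶜ \ {z}),
    hK.union (hZ.mono (sdiff_subset.trans hUZ)) sdiff_subset, ?_⟩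
  ext v
  simp only [mem_compl_iff, mem_singleton_iff, closedNbhd_union, mem_union, not_or]
  constructor
  · rintro ⟨hvK, hvU⟩
    by_contra hvz
    exact hvU (Or.inl ⟨hvK, hvz⟩)
  · rintro rfl
    refine ⟨hz, ?_⟩
    rintro (⟨-, hzz⟩ | ⟨u, ⟨hu, -⟩, huz⟩)
    · exact hzz rfl
    · exact hZ (hUZ hu) (hUZ hz) huz

/-- Extend `B \ {d}` to a maximal independent set `C` avoiding `(A \ B) ∪ {d}`: then
`C ∩ A ⊆ (A ∩ B) \ {d}`, and `C ⊄ B` forces `|C| ≥ |B|`. -/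
theorem exists_maxIndep_ncard_ne_inter_ssubset [Finite V] (hni : ∀ x, ¬ Isolatable G x)
    (hA : MaxIndep G A) (hB : MaxIndep G B) (hAB : A.ncard < B.ncard) {d : V} (hd : d ∈ A ∩ B) :
    ∃ C, MaxIndep G C ∧ C.ncard ≠ A.ncard ∧ C ∩ A ⊂ A ∩ B := by
  have hZA : A \ B ∪ {d} ⊆ A := union_subset sdiff_subset (singleton_subset_iff.2 hd.1)
  have hJZ : Disjoint (B \ {d}) (A \ B ∪ {d}) :=
    disjoint_union_right.2 ⟨disjoint_left.2 fun _ hv hv' => hv'.2 hv.1,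
      disjoint_singleton_right.2 fun h => h.2 rfl⟩
  obtain ⟨C, hC, hBC, hCZ⟩ := exists_maxIndep_superset_disjoint hni (hB.1.mono sdiff_subset)
    (hA.1.mono hZA) hJZ
  have hdC : d ∉ C := fun h => disjoint_left.1 hCZ h (Or.inr rfl)
  refine ⟨C, hC, ?_, ⟨fun v ⟨hvC, hvA⟩ => ⟨hvA, ?_⟩, fun h => hdC (h hd).1⟩⟩
  · obtain ⟨c, hcC, hcB⟩ := not_subset.1 fun h => hdC ((hC.2 B hB.1 h).symm ▸ hd.2)
    have : B.ncard ≤ C.ncard := calc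
      B.ncard = (insert c (B \ {d})).ncard := by
        rw [ncard_insert_of_notMem fun h => hcB h.1, ncard_sdiff_singleton_add_one hd.2]
      _ ≤ C.ncard := ncard_le_ncard (insert_subset hcC hBC)
    omega
  · by_contra hvB
    exact disjoint_left.1 hCZ hvC (Or.inl ⟨hvA, hvB⟩)

theorem exists_disjoint_maxIndep_ncard_ne [Finite V] (hni : ∀ x, ¬ Isolatable G x)
    (hG : ¬ WellCovered G) :
    ∃ A B, MaxIndep G A ∧ MaxIndep G B ∧ Disjoint A B ∧ A.ncard ≠ B.ncard := by
  obtain ⟨A, B, hA, hB, hAB⟩ := exists_maxIndep_ncard_lt hG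
  replace hAB := hAB.ne
  induction h : (A ∩ B).ncard using Nat.strong_induction_on generalizing A B with
  | _ n ih =>
  rcases (A ∩ B).eq_empty_or_nonempty with hAB' | ⟨d, hd⟩
  · exact ⟨A, B, hA, hB, disjoint_iff_inter_eq_empty.2 hAB', hAB⟩
  rcases hAB.lt_or_gt with hlt | hgt
  · obtain ⟨C, hC, hCA, hsub⟩ := exists_maxIndep_ncard_ne_inter_ssubset hni hA hB hlt hd
    exact ih _ (h ▸ ncard_lt_ncard hsub) C A hC hA hCA rfl
  · obtain ⟨C, hC, hCB, hsub⟩ :=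
      exists_maxIndep_ncard_ne_inter_ssubset hni hB hA hgt ⟨hd.2, hd.1⟩
    exact ih _ (h ▸ inter_comm B A ▸ ncard_lt_ncard hsub) C B hC hB hCB rfl

end Graph

section BoxProd

variable {V W : Type*} {G : SimpleGraph V} {H : SimpleGraph W} {A A' : Set V} {T T' : Set W}

lemma closedNbhd_boxProd_prod :
    ClosedNbhd (G □ H) (A ×ˢ T) = A ×ˢ ClosedNbhd H T ∪ ClosedNbhd G A ×ˢ T := by
  ext ⟨v, w⟩
  simp only [mem_closedNbhd, mem_union, mem_prod, boxProd_adj, Prod.exists]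
  aesop

lemma closedNbhd_boxProd_prod_of_maxIndep (hA : MaxIndep G A) (hT : MaxIndep H T) :
    ClosedNbhd (G □ H) (A ×ˢ T) = A ×ˢ univ ∪ univ ×ˢ T := by
  rw [closedNbhd_boxProd_prod, hA.closedNbhd_eq_univ, hT.closedNbhd_eq_univ]

lemma IsIndep.boxProd_prod (hA : IsIndep G A) (hT : IsIndep H T) :
    IsIndep (G □ H) (A ×ˢ T) := by
  rintro ⟨a, t⟩ ⟨ha, ht⟩ ⟨a', t'⟩ ⟨ha', ht'⟩ (⟨hadj, -⟩ | ⟨hadj, -⟩)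
  · exact hA ha ha' hadj
  · exact hT ht ht' hadj

lemma isIndep_prod_union_prod (hA : MaxIndep G A) (hA' : IsIndep G A') (hAA' : Disjoint A A')
    (hT : MaxIndep H T) (hT' : IsIndep H T') (hTT' : Disjoint T T') :
    IsIndep (G □ H) (A ×ˢ T ∪ A' ×ˢ T') := by
  refine (hA.1.boxProd_prod hT.1).union (hA'.boxProd_prod hT') ?_
  rw [closedNbhd_boxProd_prod_of_maxIndep hA hT]
  rintro ⟨v, w⟩ ⟨hv, hw⟩ (⟨hv', -⟩ | ⟨-, hw'⟩)
  · exact disjoint_left.1 hAA' hv' hv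
  · exact disjoint_left.1 hTT' hw' hw

lemma ncard_prod_union_prod [Finite V] [Finite W] (hAA' : Disjoint A A') :
    (A ×ˢ T ∪ A' ×ˢ T').ncard = A.ncard * T.ncard + A'.ncard * T'.ncard := by
  rw [ncard_union_eq (disjoint_prod.2 (Or.inl hAA')), ncard_prod, ncard_prod]

theorem not_wellCovered_boxProd_of_isolatable [Finite V] [Finite W] {x : V}
    (hx : Isolatable G x) (hH : ¬ WellCovered H) : ¬ WellCovered (G □ H) := by
  intro hGH
  obtain ⟨M, hM, hMx⟩ := hx
  obtain ⟨T₁, T₂, hT₁, hT₂, hlt⟩ := exists_maxIndep_ncard_lt hH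
  have hxM : x ∉ ClosedNbhd G M := show x ∈ (ClosedNbhd G M)ᶜ by rw [hMx]; rfl
  have hdom : ∀ v, v ∈ ClosedNbhd G M ∨ v = x := fun v => by
    rw [← mem_singleton_iff, ← hMx]; exact em _
  have hdisj : Disjoint M {x} := disjoint_singleton_right.2 fun h => hxM (Or.inl h)
  have hP₁ : IsIndep (G □ H) (M ×ˢ T₂ ∪ {x} ×ˢ T₁) := by
    refine (hM.boxProd_prod hT₂.1).union ((isIndep_singleton x).boxProd_prod hT₁.1) ?_
    rw [closedNbhd_boxProd_prod, hT₂.closedNbhd_eq_univ]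
    rintro ⟨v, w⟩ ⟨rfl, -⟩ (⟨hv, -⟩ | ⟨hv, -⟩)
    exacts [hxM (Or.inl hv), hxM hv]
  have hP₂ : IsIndep (G □ H) ((M ∪ {x}) ×ˢ T₂) :=
    (hM.union (isIndep_singleton x) (singleton_subset_iff.2 hxM)).boxProd_prod hT₂.1
  have hN : ClosedNbhd (G □ H) ((M ∪ {x}) ×ˢ T₂) ⊆ ClosedNbhd (G □ H) (M ×ˢ T₂ ∪ {x} ×ˢ T₁) := by
    rw [closedNbhd_union, closedNbhd_boxProd_prod, closedNbhd_boxProd_prod,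
      closedNbhd_boxProd_prod, hT₁.closedNbhd_eq_univ, hT₂.closedNbhd_eq_univ]
    rintro ⟨v, w⟩ hvw
    have := hdom v
    simp only [mem_union, mem_prod, mem_univ, mem_singleton_iff, and_true] at hvw ⊢
    tauto
  have := hGH.ncard_le_of_closedNbhd_subset hP₁ hP₂ hN
  rw [ncard_prod, ncard_prod_union_prod hdisj, ncard_union_eq hdisj, ncard_singleton] at this
  linarith

theorem not_wellCovered_boxProd_of_disjoint [Finite V] [Finite W]
    (hA : MaxIndep G A) (hA' : MaxIndep G A') (hAA' : Disjoint A A') (ha : A.ncard ≠ A'.ncard)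
    (hT : MaxIndep H T) (hT' : MaxIndep H T') (hTT' : Disjoint T T') (ht : T.ncard ≠ T'.ncard) :
    ¬ WellCovered (G □ H) := by
  intro hGH
  have hP := isIndep_prod_union_prod hA hA'.1 hAA' hT hT'.1 hTT'
  have hP' := isIndep_prod_union_prod hA hA'.1 hAA' hT' hT.1 hTT'.symm
  have hN : ClosedNbhd (G □ H) (A ×ˢ T ∪ A' ×ˢ T') = ClosedNbhd (G □ H) (A ×ˢ T' ∪ A' ×ˢ T) := by
    simp only [closedNbhd_union, closedNbhd_boxProd_prod_of_maxIndep, hA, hA', hT, hT']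
    ext
    simp only [mem_union, mem_prod, mem_univ, and_true, true_and]
    tauto
  have h := le_antisymm (hGH.ncard_le_of_closedNbhd_subset hP hP' hN.ge)
    (hGH.ncard_le_of_closedNbhd_subset hP' hP hN.le)
  rw [ncard_prod_union_prod hAA', ncard_prod_union_prod hAA'] at h
  zify at h
  have h' : ((A.ncard : ℤ) - A'.ncard) * (T.ncard - T'.ncard) = 0 := by linear_combination -h
  exact mul_ne_zero (sub_ne_zero.2 (Nat.cast_injective.ne ha))
    (sub_ne_zero.2 (Nat.cast_injective.ne ht)) h'

end BoxProd

/-- If `G □ H` is well-covered, then at least one of `G` or `H` is well-covered. -/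
theorem stmt_5 {V W : Type*} [Fintype V] [Fintype W]
    (G : SimpleGraph V) (H : SimpleGraph W)
    (hGH : WellCovered (G.boxProd H)) :
    WellCovered G ∨ WellCovered H := by
  by_contra! ⟨hG, hH⟩
  rcases em (∃ x, Isolatable G x) with ⟨x, hx⟩ | hx
  · exact not_wellCovered_boxProd_of_isolatable hx hH hGH
  rcases em (∃ y, Isolatable H y) with ⟨y, hy⟩ | hy
  · exact not_wellCovered_boxProd_of_isolatable hy hG (hGH.of_iso (boxProdComm H G))
  simp only [not_exists] at hx hy
  obtain ⟨A, A', hA, hA', hAA', ha⟩ := exists_disjoint_maxIndep_ncard_ne hx hG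
  obtain ⟨T, T', hT, hT', hTT', ht⟩ := exists_disjoint_maxIndep_ncard_ne hy hH
  exact not_wellCovered_boxProd_of_disjoint hA hA' hAA' ha hT hT' hTT' ht hGH
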